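/- Let P be symmetric positive definite and Q + Q^T = diag(-1,0,...,0,1). Consider the SAT-modified system u'(t) = -P⁻¹ Q u(t) - θ P⁻¹ (u_0(t) - g) e_0 with g = u_{n-1}(t) (periodic self-coupling of a single block, K=1). Then E(t) = u(t)^T P u(t) satisfies E'(t) = -2θ·(u_0(t) - u_{n-1}(t))·u_0(t) + u_0(t)^2 - u_{n-1}(t)^2; in particular for θ = 1, E'(t) = -(u_0(t) - u_{n-1}(t))^2 ≤ 0. -/

import Mathlib

open Matrix

/-!
Since `P` is symmetric, `E' = 2 uᵀ P u'`, and `P u' = -Q u - θ (u₀ - u_{n-1}) e₀`.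
The summation-by-parts property `Q + Qᵀ = B` gives `2 uᵀ Q u = uᵀ B u = u_{n-1}² - u₀²`,
so `E' = u₀² - u_{n-1}² - 2θ (u₀ - u_{n-1}) u₀`, which for `θ = 1` is `-(u₀ - u_{n-1})²`.
-/

section Calculus

variable {𝕜 : Type*} [NontriviallyNormedField 𝕜] {ι κ : Type*} [Fintype ι]
  {u v : 𝕜 → ι → 𝕜} {u' v' : ι → 𝕜} {t : 𝕜}

theorem HasDerivAt.dotProduct (hu : HasDerivAt u u' t) (hv : HasDerivAt v v' t) :
    HasDerivAt (fun s => u s ⬝ᵥ v s) (u' ⬝ᵥ v t + u t ⬝ᵥ v') t := by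
  have := HasDerivAt.fun_sum (u := Finset.univ) fun i _ =>
    (hasDerivAt_pi.mp hu i).fun_mul (hasDerivAt_pi.mp hv i)
  rwa [Finset.sum_add_distrib] at this

theorem HasDerivAt.mulVec (A : Matrix κ ι 𝕜) (hu : HasDerivAt u u' t) :
    HasDerivAt (fun s => A *ᵥ u s) (A *ᵥ u') t :=
  hasDerivAt_pi.mpr fun i =>
    ((hasDerivAt_const t (A i)).dotProduct hu).congr_deriv (by rw [zero_dotProduct, zero_add]; rfl)

theorem HasDerivAt.dotProduct_mulVec_self {A : Matrix ι ι 𝕜} (hA : A.IsSymm)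
    (hu : HasDerivAt u u' t) :
    HasDerivAt (fun s => u s ⬝ᵥ A *ᵥ u s) (2 * (u t ⬝ᵥ A *ᵥ u')) t :=
  (hu.dotProduct (hu.mulVec A)).congr_deriv <| by
    rw [dotProduct_mulVec, ← mulVec_transpose, hA.eq, dotProduct_comm, two_mul]

theorem HasDerivAt.dotProduct_mulVec_self_of_eq_inv_mulVec [DecidableEq ι] {P : Matrix ι ι 𝕜}
    (hPsymm : P.IsSymm) (hPdet : IsUnit P.det) {w : ι → 𝕜} (hu : HasDerivAt u (P⁻¹ *ᵥ w) t) :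
    HasDerivAt (fun s => u s ⬝ᵥ P *ᵥ u s) (2 * (u t ⬝ᵥ w)) t := by
  simpa [mulVec_mulVec, mul_nonsing_inv P hPdet] using hu.dotProduct_mulVec_self hPsymm

end Calculus

section QuadraticForm

variable {R : Type*} [CommSemiring R] {ι : Type*} [Fintype ι]

theorem dotProduct_add_transpose_mulVec_self (Q : Matrix ι ι R) (x : ι → R) :
    x ⬝ᵥ (Q + Qᵀ) *ᵥ x = 2 * (x ⬝ᵥ Q *ᵥ x) := by
  rw [add_mulVec, dotProduct_add, mulVec_transpose, dotProduct_comm x (x ᵥ* Q), ← dotProduct_mulVec,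
    two_mul]

variable [DecidableEq ι]

theorem dotProduct_diagonal_mulVec_self (d x : ι → R) :
    x ⬝ᵥ diagonal d *ᵥ x = ∑ k, d k * x k ^ 2 := by
  simp only [dotProduct, mulVec_diagonal]
  exact Finset.sum_congr rfl fun k _ => by ring

theorem dotProduct_diagonal_ite_mulVec_self {i j : ι} (hij : i ≠ j) (a b : R) (x : ι → R) :
    x ⬝ᵥ diagonal (fun k => if k = i then a else if k = j then b else 0) *ᵥ x =
      a * x i ^ 2 + b * x j ^ 2 := by
  rw [dotProduct_diagonal_mulVec_self, Fintype.sum_eq_add i j hij fun k hk => by simp [hk.1, hk.2]]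
  simp [hij.symm]

end QuadraticForm

theorem dotProduct_mulVec_self_of_add_transpose_eq {R : Type*} [CommRing R] {ι : Type*}
    [Fintype ι] [DecidableEq ι] {i j : ι} (hij : i ≠ j) {Q : Matrix ι ι R}
    (hQ : Q + Qᵀ = diagonal (fun k => if k = i then -1 else if k = j then 1 else 0))
    (x : ι → R) : 2 * (x ⬝ᵥ Q *ᵥ x) = x j ^ 2 - x i ^ 2 := by
  rw [← dotProduct_add_transpose_mulVec_self, hQ, dotProduct_diagonal_ite_mulVec_self hij]
  ring

theorem sbp_sat_energy_rate_periodic (n : ℕ)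
    (P Q : Matrix (Fin (n + 2)) (Fin (n + 2)) ℝ) (hP : P.PosDef)
    (hQ : Q + Qᵀ = Matrix.diagonal (fun i =>
      if i = 0 then (-1 : ℝ) else if i = Fin.last (n + 1) then 1 else 0))
    (θ : ℝ) (u : ℝ → (Fin (n + 2) → ℝ))
    (hu : ∀ t, HasDerivAt u
      (-(P⁻¹ * Q).mulVec (u t)
        - θ • P⁻¹.mulVec ((u t 0 - u t (Fin.last (n + 1))) • (Pi.single 0 1 : Fin (n + 2) → ℝ))) t) :
    ∀ t, HasDerivAt (fun s => u s ⬝ᵥ P.mulVec (u s))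
        (-2 * θ * (u t 0 - u t (Fin.last (n + 1))) * u t 0
          + u t 0 ^ 2 - u t (Fin.last (n + 1)) ^ 2) t
      ∧ (θ = 1 → HasDerivAt (fun s => u s ⬝ᵥ P.mulVec (u s))
          (-(u t 0 - u t (Fin.last (n + 1))) ^ 2) t
        ∧ -(u t 0 - u t (Fin.last (n + 1))) ^ 2 ≤ 0) := by
  intro t
  set c := u t 0 - u t (Fin.last (n + 1))
  have hPsymm : P.IsSymm := isHermitian_iff_isSymm.mp hP.isHermitian
  have hPdet : IsUnit P.det := (isUnit_iff_isUnit_det P).mp hP.isUnit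
  have hrate := HasDerivAt.dotProduct_mulVec_self_of_eq_inv_mulVec hPsymm hPdet
    (w := -(Q *ᵥ u t) - θ • c • Pi.single 0 1) (by
      simpa only [mulVec_sub, mulVec_neg, mulVec_smul, mulVec_mulVec] using hu t)
  have hboundary := dotProduct_mulVec_self_of_add_transpose_eq Fin.last_pos'.ne hQ (u t)
  have hE : HasDerivAt (fun s => u s ⬝ᵥ P *ᵥ u s)
      (-2 * θ * c * u t 0 + u t 0 ^ 2 - u t (Fin.last (n + 1)) ^ 2) t :=
    hrate.congr_deriv <| by
      simp only [dotProduct_sub, dotProduct_neg, dotProduct_smul, dotProduct_single, smul_eq_mul]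
      linarith
  exact ⟨hE, fun hθ => ⟨hE.congr_deriv (by rw [hθ]; ring), neg_nonpos.mpr (sq_nonneg c)⟩⟩
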